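/- arXiv:1602.03658 — 2 statements merged into one kernel-verified Lean document; each statement's English description precedes it below -/
import Mathlib

section
/- In the linear setting with B ∈ ℝ^{K×N} and Λ, C positive definite, the rMAP sample û_MAP = L⁻¹(BᵀΛ⁻¹(d + θ) + C⁻¹(u₀ + ε)), with θ ∼ N(0, Λ), ε ∼ N(0, C) independent, has exactly the posterior distribution N(ū, C_post), where ū = u₀ + C Bᵀ(Λ + B C Bᵀ)⁻¹(d − B u₀) and C_post = C − C Bᵀ(Λ + B C Bᵀ)⁻¹ B C. -/
/-!
The data term `Bᵀ Λ⁻¹ (d + θ)` and the prior term `C⁻¹ (u₀ + ε)` are independent Gaussian vectors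
with covariances `Bᵀ Λ⁻¹ B` and `C⁻¹`, so their sum is Gaussian with covariance `L`, and applying
`L⁻¹` gives covariance `L⁻¹ L L⁻¹ = L⁻¹`. The Woodbury identity turns `L⁻¹` into
`C - C Bᵀ (Λ + B C Bᵀ)⁻¹ B C`, and with it the mean `L⁻¹ (Bᵀ Λ⁻¹ d + C⁻¹ u₀)` into `ū`.
-/

open MeasureTheory ProbabilityTheory Matrix

/-- A random vector `X` is Gaussian with mean `m` and covariance `S` iff every
one-dimensional linear projection has the corresponding real Gaussian law. -/
def IsGaussianVec {Ω : Type} [MeasurableSpace Ω] {ι : Type} [Fintype ι]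
    (P : Measure Ω) (X : Ω → ι → ℝ) (m : ι → ℝ) (S : Matrix ι ι ℝ) : Prop :=
  ∀ a : ι → ℝ, P.map (fun ω => a ⬝ᵥ X ω)
    = gaussianReal (a ⬝ᵥ m) ((a ⬝ᵥ S.mulVec a).toNNReal)

namespace IsGaussianVec

variable {Ω : Type} [MeasurableSpace Ω] {P : Measure Ω} {ι κ : Type} [Fintype ι] [Fintype κ]
  {X Y : Ω → ι → ℝ} {m m' : ι → ℝ} {S S' : Matrix ι ι ℝ}

lemma aemeasurable_dotProduct (hX : IsGaussianVec P X m S) (a : ι → ℝ) :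
    AEMeasurable (fun ω => a ⬝ᵥ X ω) P :=
  AEMeasurable.of_map_ne_zero (by rw [hX a]; exact IsProbabilityMeasure.ne_zero _)

lemma const_add (hX : IsGaussianVec P X m S) (c : ι → ℝ) :
    IsGaussianVec P (fun ω => c + X ω) (c + m) S := by
  intro a
  simp only [dotProduct_add]
  change P.map ((a ⬝ᵥ c + ·) ∘ (a ⬝ᵥ X ·)) = _
  rw [← AEMeasurable.map_map_of_aemeasurable
    (measurable_const_add _).aemeasurable (hX.aemeasurable_dotProduct a),
    hX a, gaussianReal_map_const_add, add_comm]

lemma mulVec (hX : IsGaussianVec P X m S) (A : Matrix κ ι ℝ) :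
    IsGaussianVec P (fun ω => A *ᵥ X ω) (A *ᵥ m) (A * S * Aᵀ) := by
  intro a
  have hdot : ∀ v, a ⬝ᵥ A *ᵥ v = Aᵀ *ᵥ a ⬝ᵥ v := fun v => by
    rw [dotProduct_mulVec, mulVec_transpose]
  simp only [hdot, ← mulVec_mulVec, hX (Aᵀ *ᵥ a)]

lemma add_of_indepFun (hX : IsGaussianVec P X m S) (hY : IsGaussianVec P Y m' S')
    (hS : S.PosSemidef) (hS' : S'.PosSemidef) (hXY : IndepFun X Y P) :
    IsGaussianVec P (fun ω => X ω + Y ω) (m + m') (S + S') := by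
  intro a
  have hdot : Measurable fun v : ι → ℝ => a ⬝ᵥ v := by fun_prop
  have hq : ∀ {T : Matrix ι ι ℝ}, T.PosSemidef → 0 ≤ a ⬝ᵥ T *ᵥ a := fun hT => by
    simpa using hT.dotProduct_mulVec_nonneg a
  simp only [dotProduct_add, add_mulVec, Real.toNNReal_add (hq hS) (hq hS')]
  exact gaussianReal_add_gaussianReal_of_indepFun (hXY.comp hdot hdot) (hX a) (hY a)

end IsGaussianVec

section PosteriorAlgebra

variable {R : Type*} [CommRing R] {k m n : Type*} [Fintype m] [Fintype n]
  [DecidableEq m] [DecidableEq n]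

lemma Matrix.IsSymm.mul_inv_mul_self_mul_transpose (A : Matrix k n R) {S : Matrix n n R}
    (hS : S.IsSymm) (hSu : IsUnit S) : A * S⁻¹ * S * (A * S⁻¹)ᵀ = A * S⁻¹ * Aᵀ := by
  rw [nonsing_inv_mul_cancel_right _ _ ((isUnit_iff_isUnit_det S).mp hSu), transpose_mul,
    hS.inv.eq, Matrix.mul_assoc]

lemma Matrix.IsSymm.inv_mul_self_mul_inv_transpose {S : Matrix n n R} (hS : S.IsSymm)
    (hSu : IsUnit S) : S⁻¹ * S * S⁻¹ᵀ = S⁻¹ := by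
  simpa using hS.mul_inv_mul_self_mul_transpose (1 : Matrix n n R) hSu

variable (B : Matrix m n R) {Λ : Matrix m m R} {C : Matrix n n R}

lemma posteriorPrecision_inv_eq (hΛ : IsUnit Λ) (hC : IsUnit C) (hM : IsUnit (Λ + B * C * Bᵀ)) :
    (Bᵀ * Λ⁻¹ * B + C⁻¹)⁻¹ = C - C * Bᵀ * (Λ + B * C * Bᵀ)⁻¹ * B * C := by
  have hΛΛ : Λ⁻¹⁻¹ = Λ := nonsing_inv_nonsing_inv Λ ((isUnit_iff_isUnit_det Λ).mp hΛ)
  have hCC : C⁻¹⁻¹ = C := nonsing_inv_nonsing_inv C ((isUnit_iff_isUnit_det C).mp hC)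
  rw [add_comm, add_mul_mul_inv_eq_sub C⁻¹ Bᵀ Λ⁻¹ B (isUnit_nonsing_inv_iff.mpr hC)
    (isUnit_nonsing_inv_iff.mpr hΛ) (by rwa [hΛΛ, hCC]), hΛΛ, hCC]

lemma posteriorPrecision_inv_mul_eq_gain (hΛ : IsUnit Λ) (hC : IsUnit C)
    (hM : IsUnit (Λ + B * C * Bᵀ)) :
    (Bᵀ * Λ⁻¹ * B + C⁻¹)⁻¹ * Bᵀ * Λ⁻¹ = C * Bᵀ * (Λ + B * C * Bᵀ)⁻¹ := by
  have hBCB : (Λ + B * C * Bᵀ)⁻¹ * (B * C * Bᵀ) = 1 - (Λ + B * C * Bᵀ)⁻¹ * Λ := by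
    rw [eq_sub_iff_add_eq, ← Matrix.mul_add, add_comm _ Λ,
      nonsing_inv_mul _ ((isUnit_iff_isUnit_det _).mp hM)]
  calc (Bᵀ * Λ⁻¹ * B + C⁻¹)⁻¹ * Bᵀ * Λ⁻¹
      = C * Bᵀ * Λ⁻¹ - C * Bᵀ * ((Λ + B * C * Bᵀ)⁻¹ * (B * C * Bᵀ)) * Λ⁻¹ := by
        rw [posteriorPrecision_inv_eq B hΛ hC hM]
        simp only [Matrix.sub_mul, Matrix.mul_assoc]
    _ = C * Bᵀ * (Λ + B * C * Bᵀ)⁻¹ := by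
        rw [hBCB, Matrix.mul_sub, Matrix.mul_one, Matrix.sub_mul, sub_sub_cancel, Matrix.mul_assoc,
          Matrix.mul_assoc _ Λ, mul_nonsing_inv Λ ((isUnit_iff_isUnit_det Λ).mp hΛ),
          Matrix.mul_one]

lemma posteriorPrecision_inv_mulVec_eq (hΛ : IsUnit Λ) (hC : IsUnit C)
    (hM : IsUnit (Λ + B * C * Bᵀ)) (d : m → R) (u₀ : n → R) :
    (Bᵀ * Λ⁻¹ * B + C⁻¹)⁻¹ *ᵥ ((Bᵀ * Λ⁻¹) *ᵥ d + C⁻¹ *ᵥ u₀)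
      = u₀ + (C * Bᵀ * (Λ + B * C * Bᵀ)⁻¹) *ᵥ (d - B *ᵥ u₀) := by
  have hprior : (Bᵀ * Λ⁻¹ * B + C⁻¹)⁻¹ * C⁻¹ = 1 - C * Bᵀ * (Λ + B * C * Bᵀ)⁻¹ * B := by
    rw [posteriorPrecision_inv_eq B hΛ hC hM, Matrix.sub_mul,
      mul_nonsing_inv C ((isUnit_iff_isUnit_det C).mp hC),
      mul_nonsing_inv_cancel_right _ _ ((isUnit_iff_isUnit_det C).mp hC)]
  rw [mulVec_add, mulVec_mulVec, mulVec_mulVec, ← Matrix.mul_assoc,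
    posteriorPrecision_inv_mul_eq_gain B hΛ hC hM, hprior, sub_mulVec, one_mulVec, mulVec_sub,
    mulVec_mulVec]
  abel

end PosteriorAlgebra

lemma Matrix.PosDef.posSemidef_transpose_mul_inv_mul {m n : Type*} [Fintype m] [Fintype n]
    [DecidableEq m] {Λ : Matrix m m ℝ} (hΛ : Λ.PosDef) (B : Matrix m n ℝ) :
    (Bᵀ * Λ⁻¹ * B).PosSemidef := by
  simpa using hΛ.inv.posSemidef.conjTranspose_mul_mul_same B

lemma IsGaussianVec.precision_weighted_sum {Ω : Type} [MeasurableSpace Ω] {P : Measure Ω}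
    {κ ι : Type} [Fintype κ] [Fintype ι] [DecidableEq κ] [DecidableEq ι]
    (B : Matrix κ ι ℝ) {Λ : Matrix κ κ ℝ} {C : Matrix ι ι ℝ} (hΛ : Λ.PosDef) (hC : C.PosDef)
    {θ : Ω → κ → ℝ} {ε : Ω → ι → ℝ} (hθ : IsGaussianVec P θ 0 Λ) (hε : IsGaussianVec P ε 0 C)
    (hindep : IndepFun θ ε P) (d : κ → ℝ) (u₀ : ι → ℝ) :
    IsGaussianVec P (fun ω => (Bᵀ * Λ⁻¹) *ᵥ (d + θ ω) + C⁻¹ *ᵥ (u₀ + ε ω))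
      ((Bᵀ * Λ⁻¹) *ᵥ d + C⁻¹ *ᵥ u₀) (Bᵀ * Λ⁻¹ * B + C⁻¹) := by
  have hΛsymm : Λ.IsSymm := isHermitian_iff_isSymm.mp hΛ.isHermitian
  have hCsymm : C.IsSymm := isHermitian_iff_isSymm.mp hC.isHermitian
  have hdata : IsGaussianVec P (fun ω => (Bᵀ * Λ⁻¹) *ᵥ (d + θ ω)) ((Bᵀ * Λ⁻¹) *ᵥ d)
      (Bᵀ * Λ⁻¹ * B) := by
    have h := (hθ.const_add d).mulVec (Bᵀ * Λ⁻¹)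
    rwa [add_zero, hΛsymm.mul_inv_mul_self_mul_transpose Bᵀ hΛ.isUnit, transpose_transpose] at h
  have hprior : IsGaussianVec P (fun ω => C⁻¹ *ᵥ (u₀ + ε ω)) (C⁻¹ *ᵥ u₀) C⁻¹ := by
    have h := (hε.const_add u₀).mulVec C⁻¹
    rwa [add_zero, hCsymm.inv_mul_self_mul_inv_transpose hC.isUnit] at h
  exact hdata.add_of_indepFun hprior (hΛ.posSemidef_transpose_mul_inv_mul B) hC.inv.posSemidef
    (hindep.comp (φ := fun v => (Bᵀ * Λ⁻¹) *ᵥ (d + v)) (ψ := fun v => C⁻¹ *ᵥ (u₀ + v))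
      (by fun_prop) (by fun_prop))

theorem rMAP_sample_has_posterior_distribution_general {K N : ℕ}
    (B : Matrix (Fin K) (Fin N) ℝ)
    (Λ : Matrix (Fin K) (Fin K) ℝ) (C : Matrix (Fin N) (Fin N) ℝ)
    (hΛ : Λ.PosDef) (hC : C.PosDef)
    (L : Matrix (Fin N) (Fin N) ℝ) (hL : L = Bᵀ * Λ⁻¹ * B + C⁻¹)
    (d : Fin K → ℝ) (u0 : Fin N → ℝ)
    {Ω : Type} [MeasurableSpace Ω] (P : Measure Ω)
    (θ : Ω → (Fin K → ℝ)) (ε : Ω → (Fin N → ℝ))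
    (hθ : IsGaussianVec P θ 0 Λ) (hε : IsGaussianVec P ε 0 C)
    (hindep : IndepFun θ ε P) :
    IsGaussianVec P
      (fun ω => L⁻¹.mulVec ((Bᵀ * Λ⁻¹).mulVec (d + θ ω) + C⁻¹.mulVec (u0 + ε ω)))
      (u0 + (C * Bᵀ * (Λ + B * C * Bᵀ)⁻¹).mulVec (d - B.mulVec u0))
      (C - C * Bᵀ * (Λ + B * C * Bᵀ)⁻¹ * B * C) := by
  subst hL
  have hM : IsUnit (Λ + B * C * Bᵀ) :=
    (hΛ.add_posSemidef (by simpa using hC.posSemidef.mul_mul_conjTranspose_same B)).isUnit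
  have hLpd : (Bᵀ * Λ⁻¹ * B + C⁻¹).PosDef :=
    PosDef.posSemidef_add (hΛ.posSemidef_transpose_mul_inv_mul B) hC.inv
  rw [← posteriorPrecision_inv_eq B hΛ.isUnit hC.isUnit hM,
    ← posteriorPrecision_inv_mulVec_eq B hΛ.isUnit hC.isUnit hM]
  have hsample := (IsGaussianVec.precision_weighted_sum B hΛ hC hθ hε hindep d u0).mulVec
    (Bᵀ * Λ⁻¹ * B + C⁻¹)⁻¹
  rwa [(isHermitian_iff_isSymm.mp hLpd.isHermitian).inv_mul_self_mul_inv_transpose hLpd.isUnit]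
    at hsample

theorem rMAP_sample_has_posterior_distribution {K N : ℕ}
    (B : Matrix (Fin K) (Fin N) ℝ)
    (Λ : Matrix (Fin K) (Fin K) ℝ) (C : Matrix (Fin N) (Fin N) ℝ)
    (hΛ : Λ.PosDef) (hC : C.PosDef)
    (L : Matrix (Fin N) (Fin N) ℝ) (hL : L = Bᵀ * Λ⁻¹ * B + C⁻¹)
    (d : Fin K → ℝ) (u0 : Fin N → ℝ)
    {Ω : Type} [MeasurableSpace Ω] (P : Measure Ω) [IsProbabilityMeasure P]
    (θ : Ω → (Fin K → ℝ)) (ε : Ω → (Fin N → ℝ))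
    (hθm : Measurable θ) (hεm : Measurable ε)
    (hθ : IsGaussianVec P θ 0 Λ) (hε : IsGaussianVec P ε 0 C)
    (hindep : IndepFun θ ε P) :
    IsGaussianVec P
      (fun ω => L⁻¹.mulVec ((Bᵀ * Λ⁻¹).mulVec (d + θ ω) + C⁻¹.mulVec (u0 + ε ω)))
      (u0 + (C * Bᵀ * (Λ + B * C * Bᵀ)⁻¹).mulVec (d - B.mulVec u0))
      (C - C * Bᵀ * (Λ + B * C * Bᵀ)⁻¹ * B * C) :=
  rMAP_sample_has_posterior_distribution_general B Λ C hΛ hC L hL d u0 P θ ε hθ hε hindep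
end

section
/- Let G(u) = Bu with B ∈ ℝ^{K×N}, Λ, C positive definite, and define Γ := [Λ^{-1/2}B; C^{-1/2}] ∈ ℝ^{(K+N)×N} with thin QR factorization Γ = QR where R is invertible and QᵀQ = I. Then for every θⱼ ∈ ℝ^K, εⱼ ∈ ℝ^N, a vector u ∈ ℝ^N satisfies the rMAP stationarity equation Γᵀ [Λ^{-1/2}(Bu − d − θⱼ); C^{-1/2}(u − u₀ − εⱼ)] = 0 if and only if it satisfies the RTO stationarity equation QᵀQ·Qᵀ[Λ^{-1/2}(Bu − d − θⱼ); C^{-1/2}(u − u₀ − εⱼ)] = 0 (equivalently ΓᵀQQᵀ[...] = 0). Hence rMAP and RTO samples coincide in the linear case. -/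
open Matrix

theorem rMAP_eq_RTO_linear {K N : ℕ}
    (B : Matrix (Fin K) (Fin N) ℝ)
    (Λ : Matrix (Fin K) (Fin K) ℝ) (C : Matrix (Fin N) (Fin N) ℝ)
    (hΛ : Λ.PosDef) (hC : C.PosDef)
    (Λih : Matrix (Fin K) (Fin K) ℝ) (Cih : Matrix (Fin N) (Fin N) ℝ)
    (hΛih : Λih * Λih = Λ⁻¹) (hCih : Cih * Cih = C⁻¹)
    (Γ Q : Matrix (Fin K ⊕ Fin N) (Fin N) ℝ) (R : Matrix (Fin N) (Fin N) ℝ)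
    (hΓ : Γ = Matrix.fromRows (Λih * B) Cih)
    (hQR : Γ = Q * R) (hQ : Qᵀ * Q = 1) (hR : IsUnit R.det)
    (d : Fin K → ℝ) (u0 : Fin N → ℝ)
    (θj : Fin K → ℝ) (εj : Fin N → ℝ) :
    ∀ u : Fin N → ℝ,
      Γᵀ.mulVec (Sum.elim (Λih.mulVec (B.mulVec u - d - θj))
          (Cih.mulVec (u - u0 - εj))) = 0
        ↔ (Qᵀ * Q * Qᵀ).mulVec (Sum.elim (Λih.mulVec (B.mulVec u - d - θj))
            (Cih.mulVec (u - u0 - εj))) = 0 := by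
  intro u
  set v := Sum.elim (Λih.mulVec (B.mulVec u - d - θj)) (Cih.mulVec (u - u0 - εj))
  rw [hQ, Matrix.one_mul, hQR, transpose_mul, ← mulVec_mulVec]
  constructor
  · intro h
    have hRT : IsUnit Rᵀ.det := by rwa [det_transpose]
    have := congrArg (fun w => (Rᵀ⁻¹).mulVec w) h
    simpa [mulVec_mulVec, ← Matrix.mul_assoc, nonsing_inv_mul _ hRT, Matrix.one_mul] using this
  · intro h
    rw [h, mulVec_zero]
end
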